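/- arXiv:2404.02851 — 3 statements merged into one kernel-verified Lean document; each statement's English description precedes it below -/
import Mathlib

section
/- Let E and F be Banach lattices with quasi-interior points x_0 and y_0 respectively. Then x_0 ⊗ y_0 is a quasi-interior point of the Fremlin projective tensor product E ⊗̂ F. -/
open Filter Topology

/-- The sublattice-submodule of `G` generated by a set `s`. -/
def latticeSpan {G : Type*} [Lattice G] [AddCommGroup G] [Module ℝ G] (s : Set G) : Set G :=
  {x | ∀ p : Submodule ℝ G, s ⊆ p → (∀ a ∈ (p : Set G), ∀ b ∈ (p : Set G), a ⊔ b ∈ p) → x ∈ p}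

/-- `t` realizes the Banach lattice `G` as the Fremlin projective tensor
product `E ⊗̂ F`: a bilinear lattice bimorphism whose norm is the (cross)
Fremlin projective norm and whose image spans a dense subspace, satisfying
Fremlin's lattice estimate. -/
structure IsFremlinProjTensor (E F G : Type*)
    [NormedAddCommGroup E] [Lattice E] [HasSolidNorm E] [IsOrderedAddMonoid E] [NormedSpace ℝ E]
    [NormedAddCommGroup F] [Lattice F] [HasSolidNorm F] [IsOrderedAddMonoid F] [NormedSpace ℝ F]
    [NormedAddCommGroup G] [Lattice G] [HasSolidNorm G] [IsOrderedAddMonoid G] [NormedSpace ℝ G] [CompleteSpace G]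
    (t : E →ₗ[ℝ] F →ₗ[ℝ] G) : Prop where
  abs_tensor : ∀ x y, |t x y| = t |x| |y|
  pos_pos : ∀ x y, 0 < x → 0 < y → 0 < t x y
  inf_tensor_le : ∀ x₀ x₁ y₀ y₁, 0 ≤ x₀ → 0 ≤ x₁ → 0 ≤ y₀ → 0 ≤ y₁ →
    (t x₀ y₀ ⊓ t x₁ y₁) ≤ t (x₀ ⊓ x₁) (y₀ ⊔ y₁)
  cross_norm : ∀ x y, ‖t x y‖ = ‖x‖ * ‖y‖
  dense_span : Dense (Submodule.span ℝ (Set.image2 (fun x y => t x y) Set.univ Set.univ) : Set G)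

/-- `u` is a quasi-interior point of the Banach lattice `G`: `u ≥ 0` and for
every `x ≥ 0`, `x ⊓ n•u → x` in norm (equivalently, the ideal generated by `u`
is norm dense). -/
def QuasiInteriorPoint {G : Type*} [NormedAddCommGroup G] [Lattice G] [HasSolidNorm G] [IsOrderedAddMonoid G] (u : G) : Prop :=
  0 ≤ u ∧ ∀ x : G, 0 ≤ x → Tendsto (fun n : ℕ => x ⊓ n • u) atTop (nhds x)

/-- `P` is a band projection on the vector lattice `G`. -/
structure IsBandProjection {G : Type*} [Lattice G] [AddCommGroup G] [Module ℝ G]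
    (P : G →ₗ[ℝ] G) : Prop where
  idem : ∀ x, P (P x) = P x
  pos : ∀ x, 0 ≤ x → 0 ≤ P x
  proj_le : ∀ x, 0 ≤ x → P x ≤ x
  disj : ∀ x, |P x| ⊓ |x - P x| = 0

/-!
Let `u = x₀ ⊗ y₀`. For `x, y ≥ 0` the truncations `(x ⊓ n x₀) ⊗ (y ⊓ n y₀)` lie
below `n² u`, hence in the ideal generated by `u`, and converge to `x ⊗ y` because the tensor map
is bounded. Splitting into positive and negative parts, every elementary tensor lies in the
closure of that ideal, so the ideal is dense. Finally, a dense principal ideal makes `u`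
quasi-interior: if `|z| ≤ r u` and `n ≥ r`, then `0 ≤ x - x ⊓ n u = (x - n u)⁺ ≤ |x - z|`.
-/

section PosSMulMono

variable {G : Type*} [AddCommGroup G] [Lattice G] [IsOrderedAddMonoid G]

lemma nonneg_of_two_pow_nsmul_nonneg {y : G} (k : ℕ) (h : 0 ≤ 2 ^ k • y) : 0 ≤ y := by
  induction k generalizing y with
  | zero => simpa using h
  | succ k ih =>
    rw [pow_succ', mul_nsmul] at h
    exact nsmul_two_semiclosed (ih h)

variable [Module ℝ G] [TopologicalSpace G] [ContinuousSMul ℝ G] [ClosedIciTopology G]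

/-- Approximate `c ≥ 0` by the dyadic numbers `⌊c 2ᵏ⌋ / 2ᵏ`, which act monotonically since
`0 ≤ 2 • y → 0 ≤ y` in any lattice-ordered group, and pass to the limit in the closed
cone. -/
instance posSMulMono_of_closedIciTopology : PosSMulMono ℝ G := by
  refine PosSMulMono.of_smul_nonneg fun c hc x hx => ?_
  have hdyadic : ∀ k : ℕ, 0 ≤ ((⌊c * 2 ^ k⌋₊ : ℝ) / 2 ^ k) • x := fun k => by
    refine nonneg_of_two_pow_nsmul_nonneg k ?_
    rw [← Nat.cast_smul_eq_nsmul ℝ, smul_smul, Nat.cast_pow, Nat.cast_ofNat,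
      mul_div_cancel₀ _ (by positivity), Nat.cast_smul_eq_nsmul]
    exact nsmul_nonneg hx _
  have hlim : Tendsto (fun k : ℕ => (⌊c * 2 ^ k⌋₊ : ℝ) / 2 ^ k) atTop (𝓝 c) :=
    (tendsto_nat_floor_mul_div_atTop hc).comp (tendsto_pow_atTop_atTop_of_one_lt one_lt_two)
  exact isClosed_Ici.mem_of_tendsto (hlim.smul_const x) (Eventually.of_forall hdyadic)

end PosSMulMono

section PrincipalOrderIdeal

variable {G : Type*} [AddCommGroup G] [Lattice G] [Module ℝ G] [PosSMulMono ℝ G]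

lemma abs_smul_le (c : ℝ) (z : G) : |c • z| ≤ |c| • |z| := by
  have key : ∀ w : G, c • w ≤ |c| • |w| := fun w => by
    rcases abs_choice c with h | h
    · rw [h]
      exact smul_le_smul_of_nonneg_left (le_abs_self w) (h ▸ abs_nonneg c)
    · rw [h, ← abs_neg w, ← neg_smul_neg]
      exact smul_le_smul_of_nonneg_left (le_abs_self (-w)) (h ▸ abs_nonneg c)
  exact abs_le'.2 ⟨key z, by simpa only [smul_neg, abs_neg] using key (-z)⟩

variable [IsOrderedAddMonoid G]

/-- The order ideal generated by `u`, provided `0 ≤ u`. -/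
def principalOrderIdeal (u : G) : Submodule ℝ G where
  carrier := {z | ∃ r : ℝ, |z| ≤ r • u}
  zero_mem' := ⟨0, by simp⟩
  add_mem' := by
    rintro a b ⟨r, hr⟩ ⟨s, hs⟩
    exact ⟨r + s, (abs_add_le a b).trans (add_smul r s u ▸ add_le_add hr hs)⟩
  smul_mem' := by
    rintro c z ⟨r, hr⟩
    exact ⟨|c| * r, (abs_smul_le c z).trans
      (mul_smul |c| r u ▸ smul_le_smul_of_nonneg_left hr (abs_nonneg c))⟩

end PrincipalOrderIdeal

section QuasiInteriorPoint

variable {G : Type*} [NormedAddCommGroup G] [Lattice G] [HasSolidNorm G] [IsOrderedAddMonoid G]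
  [NormedSpace ℝ G]

lemma norm_inf_nsmul_sub_le {u x z : G} {r : ℝ} {n : ℕ} (hu : 0 ≤ u) (hz : |z| ≤ r • u)
    (hrn : r ≤ n) : ‖x ⊓ n • u - x‖ ≤ ‖x - z‖ := by
  have hzn : z ≤ n • u := by
    rw [← Nat.cast_smul_eq_nsmul ℝ]
    exact (le_abs_self z).trans (hz.trans (smul_le_smul_of_nonneg_right hrn hu))
  refine HasSolidNorm.solid ?_
  calc |x ⊓ n • u - x| = (x - n • u)⁺ := by
        rw [abs_sub_comm, sub_inf, sub_self, sup_comm, ← posPart_def,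
          abs_of_nonneg (posPart_nonneg _)]
    _ ≤ (x - z)⁺ := posPart_mono (sub_le_sub_left hzn x)
    _ ≤ |x - z| := sup_le (le_abs_self _) (abs_nonneg _)

lemma quasiInteriorPoint_of_dense_principalOrderIdeal {u : G} (hu : 0 ≤ u)
    (hdense : Dense (principalOrderIdeal u : Set G)) : QuasiInteriorPoint u := by
  refine ⟨hu, fun x _ => Metric.tendsto_atTop.2 fun ε hε => ?_⟩
  obtain ⟨z, ⟨r, hz⟩, hxz⟩ := Metric.mem_closure_iff.1 (hdense x) ε hε
  refine ⟨⌈r⌉₊, fun n hn => ?_⟩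
  calc dist (x ⊓ n • u) x = ‖x ⊓ n • u - x‖ := dist_eq_norm _ _
    _ ≤ ‖x - z‖ := norm_inf_nsmul_sub_le hu hz ((Nat.le_ceil r).trans (by exact_mod_cast hn))
    _ < ε := by rwa [← dist_eq_norm]

end QuasiInteriorPoint

namespace IsFremlinProjTensor

variable {E F G : Type*}
  [NormedAddCommGroup E] [Lattice E] [HasSolidNorm E] [IsOrderedAddMonoid E] [NormedSpace ℝ E]
  [NormedAddCommGroup F] [Lattice F] [HasSolidNorm F] [IsOrderedAddMonoid F] [NormedSpace ℝ F]
  [NormedAddCommGroup G] [Lattice G] [HasSolidNorm G] [IsOrderedAddMonoid G] [NormedSpace ℝ G]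
  [CompleteSpace G] {t : E →ₗ[ℝ] F →ₗ[ℝ] G}

lemma map_nonneg (ht : IsFremlinProjTensor E F G t) {x : E} {y : F} (hx : 0 ≤ x) (hy : 0 ≤ y) :
    0 ≤ t x y := by
  have h := ht.abs_tensor x y
  rw [abs_of_nonneg hx, abs_of_nonneg hy] at h
  exact h ▸ abs_nonneg _

lemma map_mono (ht : IsFremlinProjTensor E F G t) {a a' : E} {b b' : F} (ha : 0 ≤ a)
    (haa' : a ≤ a') (hb : 0 ≤ b) (hbb' : b ≤ b') : t a b ≤ t a' b' := by
  have h₁ := ht.map_nonneg (sub_nonneg.2 haa') hb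
  have h₂ := ht.map_nonneg (ha.trans haa') (sub_nonneg.2 hbb')
  rw [map_sub, LinearMap.sub_apply, sub_nonneg] at h₁
  rw [map_sub, sub_nonneg] at h₂
  exact h₁.trans h₂

lemma continuous (ht : IsFremlinProjTensor E F G t) : Continuous fun p : E × F => t p.1 p.2 :=
  (t.mkContinuous₂ 1 fun x y => by rw [ht.cross_norm, one_mul]).continuous₂

variable {x₀ : E} {y₀ : F}

lemma mem_closure_principalOrderIdeal_of_nonneg (ht : IsFremlinProjTensor E F G t)
    (hx₀ : QuasiInteriorPoint x₀) (hy₀ : QuasiInteriorPoint y₀) {x : E} {y : F} (hx : 0 ≤ x)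
    (hy : 0 ≤ y) : t x y ∈ (principalOrderIdeal (t x₀ y₀)).topologicalClosure := by
  have htrunc : ∀ n : ℕ, t (x ⊓ n • x₀) (y ⊓ n • y₀) ∈ principalOrderIdeal (t x₀ y₀) := by
    intro n
    have ha := le_inf hx (nsmul_nonneg hx₀.1 n)
    have hb := le_inf hy (nsmul_nonneg hy₀.1 n)
    refine ⟨(n * n : ℕ), ?_⟩
    calc |t (x ⊓ n • x₀) (y ⊓ n • y₀)| = t (x ⊓ n • x₀) (y ⊓ n • y₀) :=
          abs_of_nonneg (ht.map_nonneg ha hb)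
      _ ≤ t (n • x₀) (n • y₀) := ht.map_mono ha inf_le_right hb inf_le_right
      _ = ((n * n : ℕ) : ℝ) • t x₀ y₀ := by
          rw [Nat.cast_smul_eq_nsmul, map_nsmul t, LinearMap.smul_apply, map_nsmul (t x₀),
            mul_nsmul]
  have hlim : Tendsto (fun n : ℕ => t (x ⊓ n • x₀) (y ⊓ n • y₀)) atTop (𝓝 (t x y)) :=
    (ht.continuous.tendsto (x, y)).comp ((hx₀.2 x hx).prodMk_nhds (hy₀.2 y hy))
  exact mem_closure_of_tendsto hlim (Eventually.of_forall htrunc)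

lemma mem_closure_principalOrderIdeal (ht : IsFremlinProjTensor E F G t)
    (hx₀ : QuasiInteriorPoint x₀) (hy₀ : QuasiInteriorPoint y₀) (x : E) (y : F) :
    t x y ∈ (principalOrderIdeal (t x₀ y₀)).topologicalClosure := by
  have hpos {a : E} {b : F} (ha : 0 ≤ a) (hb : 0 ≤ b) :=
    ht.mem_closure_principalOrderIdeal_of_nonneg hx₀ hy₀ ha hb
  rw [← posPart_sub_negPart x, ← posPart_sub_negPart y, map_sub t, LinearMap.sub_apply,
    map_sub, map_sub]
  exact sub_mem
    (sub_mem (hpos (posPart_nonneg x) (posPart_nonneg y))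
      (hpos (posPart_nonneg x) (negPart_nonneg y)))
    (sub_mem (hpos (negPart_nonneg x) (posPart_nonneg y))
      (hpos (negPart_nonneg x) (negPart_nonneg y)))

lemma dense_principalOrderIdeal (ht : IsFremlinProjTensor E F G t)
    (hx₀ : QuasiInteriorPoint x₀) (hy₀ : QuasiInteriorPoint y₀) :
    Dense (principalOrderIdeal (t x₀ y₀) : Set G) := by
  have hspan : Submodule.span ℝ (Set.image2 (fun x y => t x y) Set.univ Set.univ) ≤
      (principalOrderIdeal (t x₀ y₀)).topologicalClosure :=
    Submodule.span_le.2 <| Set.image2_subset_iff.2 fun x _ y _ =>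
      ht.mem_closure_principalOrderIdeal hx₀ hy₀ x y
  have hdense := ht.dense_span.mono hspan
  rw [Submodule.topologicalClosure_coe] at hdense
  exact hdense.of_closure

end IsFremlinProjTensor

theorem quasiInterior_tensor_general
    {E F G : Type*}
    [NormedAddCommGroup E] [Lattice E] [HasSolidNorm E] [IsOrderedAddMonoid E] [NormedSpace ℝ E]
    [NormedAddCommGroup F] [Lattice F] [HasSolidNorm F] [IsOrderedAddMonoid F] [NormedSpace ℝ F]
    [NormedAddCommGroup G] [Lattice G] [HasSolidNorm G] [IsOrderedAddMonoid G] [NormedSpace ℝ G] [CompleteSpace G]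
    (t : E →ₗ[ℝ] F →ₗ[ℝ] G) (ht : IsFremlinProjTensor E F G t)
    (x₀ : E) (hx₀ : QuasiInteriorPoint x₀) (y₀ : F) (hy₀ : QuasiInteriorPoint y₀) :
    QuasiInteriorPoint (t x₀ y₀) :=
  quasiInteriorPoint_of_dense_principalOrderIdeal (ht.map_nonneg hx₀.1 hy₀.1)
    (ht.dense_principalOrderIdeal hx₀ hy₀)

/-- if `x₀` and `y₀` are quasi-interior points of the Banach
lattices `E` and `F`, then `x₀ ⊗ y₀` is a quasi-interior point of the Fremlin
projective tensor product `E ⊗̂ F`. -/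
theorem quasiInterior_tensor
    {E F G : Type*}
    [NormedAddCommGroup E] [Lattice E] [HasSolidNorm E] [IsOrderedAddMonoid E] [NormedSpace ℝ E] [CompleteSpace E]
    [NormedAddCommGroup F] [Lattice F] [HasSolidNorm F] [IsOrderedAddMonoid F] [NormedSpace ℝ F] [CompleteSpace F]
    [NormedAddCommGroup G] [Lattice G] [HasSolidNorm G] [IsOrderedAddMonoid G] [NormedSpace ℝ G] [CompleteSpace G]
    (t : E →ₗ[ℝ] F →ₗ[ℝ] G) (ht : IsFremlinProjTensor E F G t)
    (x₀ : E) (hx₀ : QuasiInteriorPoint x₀) (y₀ : F) (hy₀ : QuasiInteriorPoint y₀) :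
    QuasiInteriorPoint (t x₀ y₀) :=
  quasiInterior_tensor_general t ht x₀ hx₀ y₀ hy₀
end

section
/- Let E and F be Banach lattices, B_α ⊆ E and C_β ⊆ F projection bands for α ≠ α' and β ≠ β' with B_α ⊥ B_{α'} and C_β ⊥ C_{β'}. Then in the Fremlin tensor product E ⊗̄ F, the sets B_α ⊗ C_β and B_{α'} ⊗ C_{β'} are disjoint: for any u with 0 ≤ u, if u ≤ x_0 ⊗ y_0 with x_0 ∈ (B_α)_+, y_0 ∈ (C_β)_+ and u ≤ x_1 ⊗ y_1 with x_1 ∈ (B_{α'})_+, y_1 ∈ (C_{β'})_+, then u = 0. -/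
/-- `t` realizes `G` as the Fremlin (Archimedean vector lattice) tensor product
`E ⊗̄ F`: a bilinear map which is a lattice bimorphism, strictly positive on
strictly positive pairs, such that every strictly positive element of `G`
dominates some `t x y` with `x, y > 0`, satisfying Fremlin's lattice estimate,
and whose image generates `G` as a vector sublattice. -/
structure IsFremlinTensor (E F G : Type*)
    [Lattice E] [AddCommGroup E] [Module ℝ E]
    [Lattice F] [AddCommGroup F] [Module ℝ F]
    [Lattice G] [AddCommGroup G] [Module ℝ G]
    (t : E →ₗ[ℝ] F →ₗ[ℝ] G) : Prop where
  abs_tensor : ∀ x y, |t x y| = t |x| |y|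
  pos_pos : ∀ x y, 0 < x → 0 < y → 0 < t x y
  dominates : ∀ u : G, 0 < u → ∃ x y, 0 < x ∧ 0 < y ∧ t x y ≤ u
  inf_tensor_le : ∀ x₀ x₁ y₀ y₁, 0 ≤ x₀ → 0 ≤ x₁ → 0 ≤ y₀ → 0 ≤ y₁ →
    (t x₀ y₀ ⊓ t x₁ y₁) ≤ t (x₀ ⊓ x₁) (y₀ ⊔ y₁)
  generates : ∀ g : G, g ∈ latticeSpan (Set.image2 (fun x y => t x y) Set.univ Set.univ)

/-- if `B ⊥ B'` in `E` and `C ⊥ C'` in `F` (e.g. distinct members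
of families of pairwise disjoint projection bands), then in the Fremlin tensor
product the sets `B ⊗ C` and `B' ⊗ C'` are disjoint: any `u ≥ 0` dominated both
by some `x₀ ⊗ y₀` (`x₀ ∈ B₊`, `y₀ ∈ C₊`) and by some `x₁ ⊗ y₁`
(`x₁ ∈ B'₊`, `y₁ ∈ C'₊`) is zero. -/
theorem fremlinTensor_band_disjoint
    {E F G : Type*}
    [Lattice E] [AddCommGroup E] [Module ℝ E]
    [Lattice F] [AddCommGroup F] [Module ℝ F]
    [Lattice G] [AddCommGroup G] [Module ℝ G]
    (t : E →ₗ[ℝ] F →ₗ[ℝ] G) (ht : IsFremlinTensor E F G t)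
    (B B' : Set E) (C C' : Set F)
    (hB : ∀ a ∈ B, ∀ b ∈ B', |a| ⊓ |b| = 0)
    (hC : ∀ c ∈ C, ∀ d ∈ C', |c| ⊓ |d| = 0)
    (u : G) (hu : 0 ≤ u)
    (x₀ : E) (hx₀ : x₀ ∈ B) (hx₀p : 0 ≤ x₀) (y₀ : F) (hy₀ : y₀ ∈ C) (hy₀p : 0 ≤ y₀)
    (x₁ : E) (hx₁ : x₁ ∈ B') (hx₁p : 0 ≤ x₁) (y₁ : F) (hy₁ : y₁ ∈ C') (hy₁p : 0 ≤ y₁)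
    (h₀ : u ≤ t x₀ y₀) (h₁ : u ≤ t x₁ y₁) : u = 0 := by
  have hx : |x₀| ⊓ |x₁| = 0 := hB x₀ hx₀ x₁ hx₁
  have h₀' : u ≤ t |x₀| |y₀| := by
    rw [← ht.abs_tensor]; exact le_trans h₀ le_sup_left
  have h₁' : u ≤ t |x₁| |y₁| := by
    rw [← ht.abs_tensor]; exact le_trans h₁ le_sup_left
  have := le_trans (le_inf h₀' h₁')
    (ht.inf_tensor_le |x₀| |x₁| |y₀| |y₁|
      (le_trans hx₀p le_sup_left) (le_trans hx₁p le_sup_left)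
      (le_trans hy₀p le_sup_left) (le_trans hy₁p le_sup_left))
  rw [hx] at this
  simp at this
  exact le_antisymm this hu
end

section
/- Let E be a Banach lattice possessing a dense band decomposition (B_α)_{α∈I} with band projections P_α. Then a net (x_γ) in E is un-null if and only if for every α, (P_α(x_γ)) is un-null in B_α. -/
open Filter Topology

/-!
Since `|P x| ≤ |x|`, one direction is immediate. Conversely, `|x| ⊓ v ≤ |P x| ⊓ v` whenever
`0 ≤ v` lies in the band of `P`, so `x` is un-null against every element of each band. The
elements `v` with `‖|x γ| ⊓ |v|‖ → 0` form an additive submonoid, closed because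
`v ↦ ‖|x γ| ⊓ |v|‖` is `1`-Lipschitz for every `γ`; it therefore contains the closure of the sum
of the bands, which is all of `E`.
-/

lemma inf_add_le_inf_add_inf {G : Type*} [Lattice G] [AddCommGroup G] [IsOrderedAddMonoid G]
    {a b c : G} (ha : 0 ≤ a) (hb : 0 ≤ b) (hc : 0 ≤ c) :
    a ⊓ (b + c) ≤ a ⊓ b + a ⊓ c := by
  rw [inf_add, add_inf, add_inf]
  refine le_inf (le_inf ?_ ?_) (le_inf ?_ inf_le_right)
  · exact inf_le_left.trans (le_add_of_nonneg_right ha)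
  · exact inf_le_left.trans (le_add_of_nonneg_right hc)
  · exact inf_le_left.trans (le_add_of_nonneg_left hb)

namespace IsBandProjection

variable {G : Type*} [Lattice G] [AddCommGroup G] [IsOrderedAddMonoid G] [Module ℝ G]
  {P : G →ₗ[ℝ] G}

lemma compl (hP : IsBandProjection P) : IsBandProjection (LinearMap.id - P) where
  idem x := by simp [hP.idem]
  pos x hx := by simpa using hP.proj_le x hx
  proj_le x hx := by simpa using hP.pos x hx
  disj x := by simpa [inf_comm] using hP.disj x

lemma map_inf_sub_map_eq_zero (hP : IsBandProjection P) {x y : G} (hx : 0 ≤ x) (hy : 0 ≤ y) :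
    P x ⊓ (y - P y) = 0 := by
  have hPx : 0 ≤ P x := hP.pos x hx
  have hQy : 0 ≤ y - P y := sub_nonneg.2 (hP.proj_le y hy)
  refine le_antisymm ?_ (le_inf hPx hQy)
  calc P x ⊓ (y - P y) ≤ |P (x + y)| ⊓ |(x + y) - P (x + y)| := by
        rw [map_add, abs_of_nonneg (add_nonneg hPx (hP.pos y hy)),
          show x + y - (P x + P y) = (x - P x) + (y - P y) by abel,
          abs_of_nonneg (add_nonneg (sub_nonneg.2 (hP.proj_le x hx)) hQy)]
        exact inf_le_inf (le_add_of_nonneg_right (hP.pos y hy))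
          (le_add_of_nonneg_left (sub_nonneg.2 (hP.proj_le x hx)))
    _ = 0 := hP.disj (x + y)

lemma abs_map_le_map_abs (hP : IsBandProjection P) (x : G) : |P x| ≤ P |x| := by
  calc |P x| = |P x⁺ - P x⁻| := by rw [← map_sub, posPart_sub_negPart]
    _ ≤ |P x⁺| + |P x⁻| := by
        simpa only [sub_eq_add_neg, abs_neg] using abs_add_le (P x⁺) (-P x⁻)
    _ = P |x| := by
        rw [abs_of_nonneg (hP.pos _ (posPart_nonneg x)),
          abs_of_nonneg (hP.pos _ (negPart_nonneg x)), ← map_add, posPart_add_negPart]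

lemma abs_map_le_abs (hP : IsBandProjection P) (x : G) : |P x| ≤ |x| :=
  (hP.abs_map_le_map_abs x).trans (hP.proj_le _ (abs_nonneg x))

lemma map_abs_of_mem_range (hP : IsBandProjection P) {w : G} (hw : w ∈ Set.range P) :
    P |w| = |w| := by
  obtain ⟨y, rfl⟩ := hw
  have hle : |P y| - P |P y| ≤ P |y| :=
    (sub_le_self _ (hP.pos _ (abs_nonneg _))).trans (hP.abs_map_le_map_abs y)
  have hzero : |P y| - P |P y| = 0 :=
    (inf_eq_right.2 hle).symm.trans (hP.map_inf_sub_map_eq_zero (abs_nonneg y) (abs_nonneg _))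
  exact (sub_eq_zero.1 hzero).symm

lemma abs_mem_range (hP : IsBandProjection P) {w : G} (hw : w ∈ Set.range P) :
    |w| ∈ Set.range P :=
  ⟨|w|, hP.map_abs_of_mem_range hw⟩

lemma abs_inf_le_abs_map_inf (hP : IsBandProjection P) {v : G} (hv : v ∈ Set.range P)
    (hv0 : 0 ≤ v) (x : G) : |x| ⊓ v ≤ |P x| ⊓ v := by
  have hcompl : |x - P x| ≤ |x| - P |x| := by
    simpa only [LinearMap.sub_apply, LinearMap.id_apply] using hP.compl.abs_map_le_map_abs x
  have hdisj : v ⊓ (|x| - P |x|) = 0 := by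
    obtain ⟨y, rfl⟩ := hv
    simpa only [hP.idem] using hP.map_inf_sub_map_eq_zero hv0 (abs_nonneg x)
  calc |x| ⊓ v ≤ v ⊓ (|P x| + (|x| - P |x|)) := by
        rw [inf_comm]
        refine inf_le_inf_left v ?_
        calc |x| = |P x + (x - P x)| := by rw [add_sub_cancel]
          _ ≤ |P x| + |x - P x| := abs_add_le _ _
          _ ≤ |P x| + (|x| - P |x|) := add_le_add_right hcompl _
    _ ≤ v ⊓ |P x| + v ⊓ (|x| - P |x|) :=
        inf_add_le_inf_add_inf hv0 (abs_nonneg _) (sub_nonneg.2 (hP.proj_le _ (abs_nonneg x)))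
    _ = |P x| ⊓ v := by rw [hdisj, add_zero, inf_comm]

end IsBandProjection

section SolidNorm

variable {E : Type*} [NormedAddCommGroup E] [Lattice E] [HasSolidNorm E] [IsOrderedAddMonoid E]

lemma norm_le_norm_of_nonneg_of_le {a b : E} (ha : 0 ≤ a) (hab : a ≤ b) : ‖a‖ ≤ ‖b‖ :=
  HasSolidNorm.solid (by rwa [abs_of_nonneg ha, abs_of_nonneg (ha.trans hab)])

lemma lipschitzWith_norm_inf_abs (a : E) : LipschitzWith 1 fun v : E => ‖a ⊓ |v|‖ :=
  LipschitzWith.of_dist_le_mul fun v w => by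
    rw [NNReal.coe_one, one_mul, Real.dist_eq, dist_eq_norm]
    calc |‖a ⊓ |v|‖ - ‖a ⊓ |w|‖| ≤ ‖a ⊓ |v| - a ⊓ |w|‖ := abs_norm_sub_norm_le _ _
      _ ≤ ‖|v| - |w|‖ := by simpa only [inf_comm a] using norm_inf_sub_inf_le_norm |v| |w| a
      _ ≤ ‖v - w‖ := norm_abs_sub_abs v w

variable {ι : Type*} [Preorder ι]

def unNullSubmonoid (x : ι → E) : AddSubmonoid E where
  carrier := {v | Tendsto (fun γ => ‖|x γ| ⊓ |v|‖) atTop (𝓝 0)}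
  zero_mem' := by simp [tendsto_const_nhds]
  add_mem' {v w} hv hw := by
    refine squeeze_zero (fun _ => norm_nonneg _) (fun γ => ?_) (by simpa using hv.add hw)
    calc ‖|x γ| ⊓ |v + w|‖ ≤ ‖|x γ| ⊓ |v| + |x γ| ⊓ |w|‖ :=
          norm_le_norm_of_nonneg_of_le (le_inf (abs_nonneg _) (abs_nonneg _))
            ((inf_le_inf_left _ (abs_add_le v w)).trans
              (inf_add_le_inf_add_inf (abs_nonneg _) (abs_nonneg _) (abs_nonneg _)))
      _ ≤ ‖|x γ| ⊓ |v|‖ + ‖|x γ| ⊓ |w|‖ := norm_add_le _ _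

lemma isClosed_unNullSubmonoid (x : ι → E) : IsClosed (unNullSubmonoid x : Set E) :=
  (LipschitzWith.uniformEquicontinuous _ 1 fun γ => lipschitzWith_norm_inf_abs |x γ|)
    |>.equicontinuous.isClosed_setOfPred_tendsto continuous_const

end SolidNorm

theorem unNull_iff_unNull_bands_general
    {E : Type*} [NormedAddCommGroup E] [Lattice E] [HasSolidNorm E] [IsOrderedAddMonoid E] [NormedSpace ℝ E]
    {I : Type*} (P : I → E →ₗ[ℝ] E) (hP : ∀ α, IsBandProjection (P α))
    (hdense : Dense (Submodule.span ℝ (⋃ α, Set.range (P α)) : Set E))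
    {ι : Type*} [Preorder ι] (x : ι → E) :
    (∀ v : E, 0 ≤ v → Tendsto (fun γ => ‖|x γ| ⊓ v‖) atTop (nhds 0)) ↔
      ∀ α, ∀ v ∈ Set.range (P α), 0 ≤ v →
        Tendsto (fun γ => ‖|P α (x γ)| ⊓ v‖) atTop (nhds 0) := by
  constructor
  · intro h α v _ hv0
    refine squeeze_zero (fun _ => norm_nonneg _) (fun γ => ?_) (h v hv0)
    exact norm_le_norm_of_nonneg_of_le (le_inf (abs_nonneg _) hv0)
      (inf_le_inf_right v ((hP α).abs_map_le_abs _))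
  · intro h v hv0
    have hbands : ∀ α, ∀ w ∈ LinearMap.range (P α), w ∈ unNullSubmonoid x := by
      rintro α w hw
      have hw' : |w| ∈ Set.range (P α) := (hP α).abs_mem_range hw
      refine squeeze_zero (fun _ => norm_nonneg _) (fun γ => ?_) (h α |w| hw' (abs_nonneg w))
      exact norm_le_norm_of_nonneg_of_le (le_inf (abs_nonneg _) (abs_nonneg w))
        ((hP α).abs_inf_le_abs_map_inf hw' (abs_nonneg w) _)
    have hspan : (Submodule.span ℝ (⋃ α, Set.range (P α)) : Set E) ⊆ unNullSubmonoid x := by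
      intro w hw
      simp_rw [← LinearMap.coe_range, ← Submodule.iSup_eq_span] at hw
      exact Submodule.iSup_induction (motive := (· ∈ unNullSubmonoid x)) _ hw hbands (zero_mem _)
        fun _ _ => add_mem
    have hv : Tendsto (fun γ => ‖|x γ| ⊓ |v|‖) atTop (𝓝 0) :=
      (isClosed_unNullSubmonoid x).closure_subset_iff.2 hspan (hdense v)
    rwa [abs_of_nonneg hv0] at hv

/-- if a Banach lattice `E` has a dense band decomposition given
by band projections `(P_α)` (pairwise disjoint bands `B_α = range P_α` with
norm dense linear span), then a net `(x_γ)` in `E` is un-null iff for every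
`α` the net `(P_α x_γ)` is un-null in the band `B_α`. -/
theorem unNull_iff_unNull_bands
    {E : Type*} [NormedAddCommGroup E] [Lattice E] [HasSolidNorm E] [IsOrderedAddMonoid E] [NormedSpace ℝ E] [CompleteSpace E]
    {I : Type*} (P : I → E →ₗ[ℝ] E) (hP : ∀ α, IsBandProjection (P α))
    (hdisj : ∀ α β, α ≠ β → ∀ a ∈ Set.range (P α), ∀ b ∈ Set.range (P β), |a| ⊓ |b| = 0)
    (hdense : Dense (Submodule.span ℝ (⋃ α, Set.range (P α)) : Set E))
    {ι : Type*} [Preorder ι] [Nonempty ι] [IsDirected ι (· ≤ ·)] (x : ι → E) :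
    (∀ v : E, 0 ≤ v → Tendsto (fun γ => ‖|x γ| ⊓ v‖) atTop (nhds 0)) ↔
      ∀ α, ∀ v ∈ Set.range (P α), 0 ≤ v →
        Tendsto (fun γ => ‖|P α (x γ)| ⊓ v‖) atTop (nhds 0) :=
  unNull_iff_unNull_bands_general P hP hdense x
end
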